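/- Let F be a finite field of odd order q and ν ≥ 1, and let 1 ≤ 2r ≤ ν. Let A_{2r}⊕0 = [A_{2r}, 0^{(ν-2r)}] denote the block diagonal matrix. Then the group of matrices T ∈ GL_ν(F) with Tᵗ·(A_{2r}⊕0)·T = A_{2r}⊕0 has order |Sp_{2r}(F)| · |GL_{ν-2r}(F)| · q^{2r(ν-2r)}, where |Sp_{2r}(F)| = q^{r²}·∏_{i=1}^{r}(q^{2i}-1) and |GL_m(F)| = q^{m(m-1)/2}·∏_{i=1}^{m}(q^i-1). -/

import Mathlib

open Matrix

-- `sympBlock F ν s r`: block diagonal with a zero block of size `s`, then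
-- `r` copies of `[[0,1],[-1,0]]` starting at index `s`, then zeros.
open scoped Classical in
noncomputable def sympBlock (F : Type*) [Field F] (ν s r : ℕ) :
    Matrix (Fin ν) (Fin ν) F := fun i j =>
  if ∃ k, k < r ∧ (i : ℕ) = s + 2 * k ∧ (j : ℕ) = s + 2 * k + 1 then 1
  else if ∃ k, k < r ∧ (i : ℕ) = s + 2 * k + 1 ∧ (j : ℕ) = s + 2 * k then -1
  else 0

namespace Stmt19

def ptn (i : ℕ) : ℕ := if i % 2 = 0 then i + 1 else i - 1

noncomputable def sgn (F : Type*) [Field F] (i : ℕ) : F := if i % 2 = 0 then 1 else -1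

open scoped Classical in
noncomputable def jent (F : Type*) [Field F] (r i j : ℕ) : F :=
  if i < 2 * r ∧ j = ptn i then sgn F i else 0

variable {F : Type*} [Field F]

lemma ptn_ptn (i : ℕ) : ptn (ptn i) = i := by
  unfold ptn; split_ifs <;> omega

lemma ptn_lt {i r : ℕ} : ptn i < 2 * r ↔ i < 2 * r := by
  unfold ptn; split_ifs <;> omega

lemma sympBlock_eq_jent (ν r : ℕ) (i j : Fin ν) :
    sympBlock F ν 0 r i j = jent F r i.1 j.1 := by
  unfold sympBlock jent ptn sgn
  by_cases h1 : ∃ k, k < r ∧ (i : ℕ) = 0 + 2 * k ∧ (j : ℕ) = 0 + 2 * k + 1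
  · obtain ⟨k, hk, hi, hj⟩ := h1
    rw [if_pos ⟨k, hk, hi, hj⟩]
    have hp : (i : ℕ) % 2 = 0 := by omega
    simp only [hp, reduceIte]
    rw [if_pos ⟨by omega, by omega⟩]
  · by_cases h2 : ∃ k, k < r ∧ (i : ℕ) = 0 + 2 * k + 1 ∧ (j : ℕ) = 0 + 2 * k
    · obtain ⟨k, hk, hi, hj⟩ := h2
      rw [if_neg h1, if_pos ⟨k, hk, hi, hj⟩]
      have hp : ¬ ((i : ℕ) % 2 = 0) := by omega
      simp only [hp, reduceIte]
      rw [if_pos ⟨by omega, by omega⟩]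
    · rw [if_neg h1, if_neg h2, if_neg]
      rintro ⟨hlt, hj⟩
      by_cases hp : (i : ℕ) % 2 = 0
      · rw [if_pos hp] at hj
        exact h1 ⟨(i : ℕ) / 2, by omega, by omega, by omega⟩
      · rw [if_neg hp] at hj
        exact h2 ⟨(j : ℕ) / 2, by omega, by omega, by omega⟩

lemma jent_shift (r i j : ℕ) : jent F (r + 1) (i + 2) (j + 2) = jent F r i j := by
  unfold jent ptn sgn
  rw [Nat.add_mod_right]
  by_cases hp : i % 2 = 0 <;>
    simp only [hp, if_true, if_false] <;>
    exact if_congr (by omega) rfl rfl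

lemma jent_zero (i j : ℕ) : jent F 0 i j = 0 := by
  unfold jent; rw [if_neg]; rintro ⟨h, -⟩; omega

lemma jent_01 {r : ℕ} (hr : 0 < r) : jent F r 0 1 = 1 := by
  unfold jent ptn sgn; rw [if_pos, if_pos] <;> simp <;> omega

lemma jent_10 {r : ℕ} (hr : 0 < r) : jent F r 1 0 = -1 := by
  unfold jent ptn sgn; rw [if_pos, if_neg] <;> simp <;> omega

lemma jent_0j {r j : ℕ} (hj : j ≠ 1) : jent F r 0 j = 0 := by
  unfold jent ptn; rw [if_neg]; rintro ⟨-, h⟩; simp at h; omega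

lemma jent_1j {r j : ℕ} (hj : j ≠ 0) : jent F r 1 j = 0 := by
  unfold jent ptn; rw [if_neg]; rintro ⟨-, h⟩; simp at h; omega

lemma jent_i0 {r i : ℕ} (hi : i ≠ 1) : jent F r i 0 = 0 := by
  unfold jent ptn; rw [if_neg]; rintro ⟨-, h⟩; split_ifs at h <;> omega

lemma jent_i1 {r i : ℕ} (hi : i ≠ 0) : jent F r i 1 = 0 := by
  unfold jent ptn; rw [if_neg]; rintro ⟨-, h⟩; split_ifs at h <;> omega

lemma jent_skew (r i j : ℕ) : jent F r j i = - jent F r i j := by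
  unfold jent ptn sgn
  split_ifs <;> first | (exfalso; omega) | norm_num

section Counting

open Module LinearMap

variable [Fintype F]

lemma card_one_fiber {V : Type*} [AddCommGroup V] [Module F V] [Module.Finite F V]
    {n : ℕ} (hV : Module.finrank F V = n) (φ : V →ₗ[F] F) (hφ : φ ≠ 0) :
    Nat.card {y : V // φ y = 1} = Fintype.card F ^ (n - 1) := by
  haveI : Finite V := Module.finite_of_finite F
  obtain ⟨z, hz⟩ : ∃ z, φ z ≠ 0 := by
    by_contra h; push_neg at h; exact hφ (LinearMap.ext h)
  set y0 : V := (φ z)⁻¹ • z with hy0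
  have hy0v : φ y0 = 1 := by simp [hy0, inv_mul_cancel₀ hz]
  have e : {y : V // φ y = 1} ≃ LinearMap.ker φ :=
    { toFun := fun y => ⟨y.1 - y0, by simp [LinearMap.mem_ker, map_sub, y.2, hy0v]⟩
      invFun := fun k => ⟨k.1 + y0, by
        have := LinearMap.mem_ker.mp k.2
        simp [map_add, this, hy0v]⟩
      left_inv := fun y => by simp
      right_inv := fun k => by simp }
  rw [Nat.card_congr e]
  have hsurj : Function.Surjective φ := fun c => ⟨c • y0, by simp [hy0v]⟩
  have hrk : finrank F (LinearMap.range φ) = 1 := by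
    rw [LinearMap.range_eq_top.mpr hsurj, finrank_top, Module.finrank_self]
  have hrn := LinearMap.finrank_range_add_finrank_ker φ
  haveI : Fintype (LinearMap.ker φ) := Fintype.ofFinite _
  rw [Nat.card_eq_fintype_card, card_eq_pow_finrank (K := F) (V := LinearMap.ker φ)]
  congr 1
  omega

lemma card_pairs {V : Type*} [AddCommGroup V] [Module F V] [Module.Finite F V]
    {n m : ℕ} (B : LinearMap.BilinForm F V) (hV : finrank F V = n)
    (hk : finrank F (LinearMap.ker B) = m) :
    Nat.card {p : V × V // B p.1 p.2 = 1}
      = (Fintype.card F ^ n - Fintype.card F ^ m) * Fintype.card F ^ (n - 1) := by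
  classical
  haveI : Finite V := Module.finite_of_finite F
  haveI : Fintype V := Fintype.ofFinite V
  rw [Nat.card_congr (Equiv.subtypeProdEquivSigmaSubtype (fun (a b : V) => B a b = 1)),
    Nat.card_eq_fintype_card, Fintype.card_sigma]
  have key : ∀ x : V, Fintype.card {y : V // B x y = 1}
      = if B x = 0 then 0 else Fintype.card F ^ (n - 1) := by
    intro x
    split_ifs with h
    · rw [Fintype.card_eq_zero_iff]
      refine ⟨fun y => one_ne_zero (α := F) ?_⟩
      obtain ⟨yv, hy⟩ := y
      rw [h] at hy
      simpa using hy.symm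
    · rw [← Nat.card_eq_fintype_card]
      exact card_one_fiber hV (B x) h
  rw [Finset.sum_congr rfl (fun x _ => key x), Finset.sum_ite, Finset.sum_const,
    Finset.sum_const, smul_eq_mul, mul_zero, zero_add, smul_eq_mul]
  congr 1
  have h1 : (Finset.univ.filter (fun x : V => B x = 0)).card
      = Fintype.card F ^ m := by
    rw [← Fintype.card_subtype]
    haveI : Fintype (LinearMap.ker B) := Fintype.ofFinite _
    rw [Fintype.card_congr (Equiv.subtypeEquivRight
      (fun x : V => (LinearMap.mem_ker (f := B)).symm))]
    rw [card_eq_pow_finrank (K := F) (V := LinearMap.ker B), hk]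
  have h2 : (Finset.univ.filter (fun x : V => ¬ B x = 0)).card
      = Fintype.card V - (Finset.univ.filter (fun x : V => B x = 0)).card := by
    rw [Finset.filter_not, Finset.card_sdiff_of_subset (Finset.filter_subset _ _),
      Finset.card_univ]
  rw [h2, h1, card_eq_pow_finrank (K := F) (V := V), hV]

end Counting

section Fiber

open Module LinearMap Submodule

variable {V : Type*} [AddCommGroup V] [Module F V]

lemma skew {B : LinearMap.BilinForm F V} (halt : B.IsAlt) (x y : V) :
    B x y = - B y x := (LinearMap.IsAlt.neg halt y x).symm

/-- Extend a tuple by two vectors in front. -/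
noncomputable def bk (p1 p2 : V) {N n : ℕ} (h : N = n + 2) (u : Fin n → V) :
    Fin N → V := fun i =>
  if _ : i.1 = 0 then p1 else if _ : i.1 = 1 then p2 else u ⟨i.1 - 2, by omega⟩

lemma bk_zero {p1 p2 : V} {N n : ℕ} (h : N = n + 2) (u : Fin n → V) {i : Fin N}
    (hi : i.1 = 0) : bk p1 p2 h u i = p1 := by simp [bk, hi]

lemma bk_one {p1 p2 : V} {N n : ℕ} (h : N = n + 2) (u : Fin n → V) {i : Fin N}
    (hi : i.1 = 1) : bk p1 p2 h u i = p2 := by simp [bk, hi]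

lemma bk_two {p1 p2 : V} {N n : ℕ} (h : N = n + 2) (u : Fin n → V) {i : Fin N}
    (hi0 : i.1 ≠ 0) (hi1 : i.1 ≠ 1) :
    bk p1 p2 h u i = u ⟨i.1 - 2, by omega⟩ := by simp [bk, hi0, hi1]

lemma fiber_equiv (B : LinearMap.BilinForm F V) (halt : B.IsAlt) (r m : ℕ)
    (p1 p2 : V) (hp : B p1 p2 = 1) :
    Nonempty ({s : {v : Fin (2*(r+1)+m) → V // LinearIndependent F v ∧
        ∀ i j, B (v i) (v j) = jent F (r+1) i.1 j.1} //
          s.1 ⟨0, by omega⟩ = p1 ∧ s.1 ⟨1, by omega⟩ = p2} ≃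
      {u : Fin (2*r+m) → (LinearMap.ker (B p1) ⊓ LinearMap.ker (B p2) : Submodule F V) //
        LinearIndependent F u ∧
        ∀ i j, (B.restrict (LinearMap.ker (B p1) ⊓ LinearMap.ker (B p2))) (u i) (u j)
          = jent F r i.1 j.1}) := by
  set W : Submodule F V := LinearMap.ker (B p1) ⊓ LinearMap.ker (B p2) with hWdef
  have hmemW : ∀ x : V, x ∈ W ↔ B p1 x = 0 ∧ B p2 x = 0 := fun x => by
    simp [hWdef, Submodule.mem_inf, LinearMap.mem_ker]
  have hB21 : B p2 p1 = -1 := by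
    rw [skew halt, hp]
  have hNn : 2*(r+1)+m = (2*r+m) + 2 := by omega
  -- forward membership
  have fmem : ∀ (v : Fin (2*(r+1)+m) → V),
      (∀ i j, B (v i) (v j) = jent F (r+1) i.1 j.1) →
      v ⟨0, by omega⟩ = p1 → v ⟨1, by omega⟩ = p2 →
      ∀ i : Fin (2*r+m), v ⟨i.1 + 2, by omega⟩ ∈ W := by
    intro v hg h0 h1 i
    rw [hmemW]
    constructor
    · have h : B (v ⟨0, by omega⟩) (v ⟨i.1 + 2, by omega⟩) = jent F (r+1) 0 (i.1+2) :=
        hg _ _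
      rw [h0, jent_0j (by omega)] at h
      exact h
    · have h : B (v ⟨1, by omega⟩) (v ⟨i.1 + 2, by omega⟩) = jent F (r+1) 1 (i.1+2) :=
        hg _ _
      rw [h1, jent_1j (by omega)] at h
      exact h
  -- backward linear independence
  have bkli : ∀ (u : Fin (2*r+m) → W), LinearIndependent F u →
      LinearIndependent F (bk p1 p2 hNn (fun k => (u k : V))) := by
    intro u hu
    have hpair : LinearIndependent F ![p1, p2] := by
      rw [LinearIndependent.pair_iff]
      intro s t hst
      have h1 : B p1 (s • p1 + t • p2) = t := by
        simp [_root_.map_smul, halt p1, hp]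
      have h2 : B p2 (s • p1 + t • p2) = -s := by
        simp [_root_.map_smul, halt p2, hB21]
      rw [hst, map_zero] at h1 h2
      constructor
      · have := h2.symm
        rwa [neg_eq_zero] at this
      · exact h1.symm
    have hker : LinearIndependent F (fun i => (u i : V)) :=
      hu.map' W.subtype (Submodule.ker_subtype W)
    have hdisj : Disjoint (Submodule.span F (Set.range ![p1, p2]))
        (Submodule.span F (Set.range fun i => (u i : V))) := by
      have hsub : Submodule.span F (Set.range fun i => (u i : V)) ≤ W := by
        rw [Submodule.span_le]; rintro _ ⟨i, rfl⟩; exact (u i).2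
      refine Disjoint.mono_right hsub ?_
      have hr2 : Set.range ![p1, p2] = {p1, p2} := by
        ext z
        simp [Fin.exists_fin_two, or_comm]
      rw [hr2, Submodule.disjoint_def]
      intro x hx hxW
      obtain ⟨a, b, rfl⟩ := Submodule.mem_span_pair.mp hx
      rw [hmemW] at hxW
      have hb : b = 0 := by
        have := hxW.1
        simpa [_root_.map_smul, halt p1, hp] using this
      have ha : a = 0 := by
        have := hxW.2
        simpa [_root_.map_smul, halt p2, hB21, hb] using this
      rw [ha, hb]
      simp
    have hall := hpair.sum_type hker hdisj
    let e : (Fin 2 ⊕ Fin (2*r+m)) ≃ Fin (2*(r+1)+m) :=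
      finSumFinEquiv.trans (finCongr (by omega))
    refine (linearIndependent_equiv' e ?_).mp hall
    funext x
    rcases x with k | k
    · have hval : (e (Sum.inl k)).1 = k.1 := by
        simp [e, Equiv.trans_apply, finSumFinEquiv_apply_left, finCongr_apply,
          Fin.coe_cast, Fin.coe_castAdd]
      fin_cases k
      · simp only [Function.comp_apply]
        rw [bk_zero _ _ (by simpa using hval)]
        simp
      · simp only [Function.comp_apply]
        rw [bk_one _ _ (by simpa using hval)]
        simp
    · have hval : (e (Sum.inr k)).1 = 2 + k.1 := by
        simp [e, Equiv.trans_apply, finSumFinEquiv_apply_right, finCongr_apply,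
          Fin.coe_cast, Fin.coe_natAdd]
      simp only [Function.comp_apply]
      rw [bk_two _ _ (by omega) (by omega)]
      simp only [Sum.elim_inr]
      congr 1
      ext
      simp [hval]
  -- backward gram
  have bkgram : ∀ (u : Fin (2*r+m) → W),
      (∀ i j, B (u i : V) (u j : V) = jent F r i.1 j.1) →
      ∀ i j : Fin (2*(r+1)+m),
        B (bk p1 p2 hNn (fun k => (u k : V)) i) (bk p1 p2 hNn (fun k => (u k : V)) j)
          = jent F (r+1) i.1 j.1 := by
    intro u hu i j
    have hWu : ∀ k : Fin (2*r+m), B p1 (u k : V) = 0 ∧ B p2 (u k : V) = 0 :=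
      fun k => (hmemW _).mp (u k).2
    have hi3 : i.1 = 0 ∨ i.1 = 1 ∨ 2 ≤ i.1 := by omega
    have hj3 : j.1 = 0 ∨ j.1 = 1 ∨ 2 ≤ j.1 := by omega
    rcases hi3 with hi | hi | hi <;> rcases hj3 with hj | hj | hj
    · rw [bk_zero _ _ hi, bk_zero _ _ hj, hi, hj, jent_0j (by omega), halt p1]
    · rw [bk_zero _ _ hi, bk_one _ _ hj, hi, hj, jent_01 (by omega), hp]
    · rw [bk_zero _ _ hi, bk_two _ _ (by omega) (by omega), hi,
        jent_0j (by omega), (hWu _).1]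
    · rw [bk_one _ _ hi, bk_zero _ _ hj, hi, hj, jent_10 (by omega), hB21]
    · rw [bk_one _ _ hi, bk_one _ _ hj, hi, hj, jent_1j (by omega), halt p2]
    · rw [bk_one _ _ hi, bk_two _ _ (by omega) (by omega), hi,
        jent_1j (by omega), (hWu _).2]
    · rw [bk_two _ _ (by omega) (by omega), bk_zero _ _ hj, hj,
        jent_i0 (by omega), skew halt, (hWu _).1, neg_zero]
    · rw [bk_two _ _ (by omega) (by omega), bk_one _ _ hj, hj,
        jent_i1 (by omega), skew halt, (hWu _).2, neg_zero]
    · rw [bk_two _ _ (by omega) (by omega), bk_two _ _ (by omega) (by omega)]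
      have h2 : jent F (r+1) i.1 j.1 = jent F r (i.1-2) (j.1-2) := by
        rw [← jent_shift (F := F) r (i.1-2) (j.1-2)]
        congr 1 <;> omega
      rw [h2]
      exact hu _ _
  have bk0 : ∀ u : Fin (2*r+m) → W,
      bk p1 p2 hNn (fun k => (u k : V)) ⟨0, by omega⟩ = p1 :=
    fun u => bk_zero hNn _ rfl
  have bk1 : ∀ u : Fin (2*r+m) → W,
      bk p1 p2 hNn (fun k => (u k : V)) ⟨1, by omega⟩ = p2 :=
    fun u => bk_one hNn _ rfl
  constructor
  refine
    { toFun := fun s =>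
        ⟨fun i => ⟨s.1.1 ⟨i.1 + 2, by omega⟩, fmem s.1.1 s.1.2.2 s.2.1 s.2.2 i⟩, ?_, ?_⟩
      invFun := fun t =>
        ⟨⟨bk p1 p2 hNn (fun k => (t.1 k : V)), bkli t.1 t.2.1,
          bkgram t.1 (fun i j => t.2.2 i j)⟩, bk0 t.1, bk1 t.1⟩
      left_inv := fun s => ?_
      right_inv := fun t => ?_ }
  · -- linear independence of forward image
    have h1 : LinearIndependent F
        (fun i : Fin (2*r+m) => s.1.1 ⟨i.1 + 2, by omega⟩) := by
      have := s.1.2.1.comp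
        (fun i : Fin (2*r+m) => (⟨i.1 + 2, by omega⟩ : Fin (2*(r+1)+m)))
        (fun a b hab => by
          have h := congrArg Fin.val hab
          simp only at h
          exact Fin.ext (by omega))
      exact this
    exact LinearIndependent.of_comp W.subtype h1
  · -- gram of forward image
    intro i j
    have h : B (s.1.1 ⟨i.1 + 2, by omega⟩) (s.1.1 ⟨j.1 + 2, by omega⟩)
        = jent F (r+1) (i.1+2) (j.1+2) := s.1.2.2 _ _
    show B (s.1.1 ⟨i.1 + 2, by omega⟩) (s.1.1 ⟨j.1 + 2, by omega⟩) = jent F r i.1 j.1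
    rw [h]
    exact jent_shift r i.1 j.1
  · -- left_inv
    apply Subtype.ext
    apply Subtype.ext
    funext i
    show bk p1 p2 hNn (fun k => (s.1.1 ⟨k.1 + 2, by omega⟩ : V)) i = s.1.1 i
    have hi3 : i.1 = 0 ∨ i.1 = 1 ∨ 2 ≤ i.1 := by omega
    rcases hi3 with hi | hi | hi
    · rw [bk_zero _ _ hi]
      have hieq : i = ⟨0, by omega⟩ := Fin.ext hi
      rw [hieq]
      exact s.2.1.symm
    · rw [bk_one _ _ hi]
      have hieq : i = ⟨1, by omega⟩ := Fin.ext hi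
      rw [hieq]
      exact s.2.2.symm
    · rw [bk_two _ _ (by omega) (by omega)]
      show s.1.1 ⟨i.1 - 2 + 2, by omega⟩ = s.1.1 i
      have hieq : (⟨i.1 - 2 + 2, by omega⟩ : Fin (2*(r+1)+m)) = i := by
        apply Fin.ext
        show i.1 - 2 + 2 = i.1
        omega
      rw [hieq]
  · -- right_inv
    apply Subtype.ext
    funext i
    apply Subtype.ext
    show bk p1 p2 hNn (fun k => (t.1 k : V)) ⟨i.1 + 2, by omega⟩ = (t.1 i : V)
    rw [bk_two _ _ (show i.1 + 2 ≠ 0 by omega) (show i.1 + 2 ≠ 1 by omega)]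
    show ((t.1 ⟨i.1 + 2 - 2, by omega⟩ : W) : V) = (t.1 i : V)
    have : (⟨i.1 + 2 - 2, by omega⟩ : Fin (2*r+m)) = i := by
      apply Fin.ext
      show i.1 + 2 - 2 = i.1
      omega
    rw [this]

lemma finrank_W [Module.Finite F V] (B : LinearMap.BilinForm F V) (halt : B.IsAlt)
    {N : ℕ} (hV : Module.finrank F V = N) (p1 p2 : V) (hp : B p1 p2 = 1) :
    Module.finrank F (LinearMap.ker (B p1) ⊓ LinearMap.ker (B p2) : Submodule F V)
      = N - 2 := by
  have hB21 : B p2 p1 = -1 := by rw [skew halt, hp]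
  set ψ : V →ₗ[F] F × F := (B p1).prod (B p2) with hψ
  have hker : LinearMap.ker ψ = LinearMap.ker (B p1) ⊓ LinearMap.ker (B p2) :=
    LinearMap.ker_prod _ _
  have hsurj : Function.Surjective ψ := by
    intro c
    refine ⟨c.1 • p2 - c.2 • p1, ?_⟩
    have h1 : B p1 (c.1 • p2 - c.2 • p1) = c.1 := by
      simp [_root_.map_smul, hp, halt p1]
    have h2 : B p2 (c.1 • p2 - c.2 • p1) = c.2 := by
      simp [_root_.map_smul, hB21, halt p2]
    have : ψ (c.1 • p2 - c.2 • p1) = (B p1 (c.1 • p2 - c.2 • p1),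
        B p2 (c.1 • p2 - c.2 • p1)) := rfl
    rw [this, h1, h2]
  have h1 := LinearMap.finrank_range_add_finrank_ker ψ
  rw [LinearMap.range_eq_top.mpr hsurj, finrank_top, Module.finrank_prod,
    Module.finrank_self, hV, hker] at h1
  omega

lemma finrank_kerW [Module.Finite F V] (B : LinearMap.BilinForm F V) (halt : B.IsAlt)
    (p1 p2 : V) (hp : B p1 p2 = 1) :
    Module.finrank F (LinearMap.ker
        (B.restrict (LinearMap.ker (B p1) ⊓ LinearMap.ker (B p2))))
      = Module.finrank F (LinearMap.ker B) := by
  set W : Submodule F V := LinearMap.ker (B p1) ⊓ LinearMap.ker (B p2) with hWdef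
  have hmemW : ∀ x : V, x ∈ W ↔ B p1 x = 0 ∧ B p2 x = 0 := fun x => by
    simp [hWdef, Submodule.mem_inf, LinearMap.mem_ker]
  have hB21 : B p2 p1 = -1 := by rw [skew halt, hp]
  have hle : LinearMap.ker B ≤ W := by
    intro x hx
    have hx' : B x = 0 := LinearMap.mem_ker.mp hx
    rw [hmemW]
    constructor
    · rw [skew halt, hx']; simp
    · rw [skew halt, hx']; simp
  have heq : LinearMap.ker (B.restrict W) = (LinearMap.ker B).comap W.subtype := by
    ext u
    simp only [LinearMap.mem_ker, Submodule.mem_comap, Submodule.coe_subtype]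
    constructor
    · intro h
      apply LinearMap.ext
      intro x
      have hw : x + (B p2 x) • p1 - (B p1 x) • p2 ∈ W := by
        rw [hmemW]
        constructor
        · simp [_root_.map_smul, halt p1, hp]
        · simp [_root_.map_smul, halt p2, hB21]
      have h1 : B ↑u (x + (B p2 x) • p1 - (B p1 x) • p2) = 0 := by
        have h2 := DFunLike.congr_fun h (⟨_, hw⟩ : W)
        simpa using h2
      have hu1 : B (↑u) p1 = 0 := by
        rw [skew halt, ((hmemW ↑u).mp u.2).1, neg_zero]
      have hu2 : B (↑u) p2 = 0 := by
        rw [skew halt, ((hmemW ↑u).mp u.2).2, neg_zero]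
      simpa [_root_.map_smul, hu1, hu2] using h1
    · intro h
      apply LinearMap.ext
      intro w
      show B ↑u ↑w = 0
      rw [h]
      simp
  rw [heq]
  exact LinearEquiv.finrank_eq (Submodule.comapSubtypeEquivOfLe hle)

lemma restrict_isAlt (B : LinearMap.BilinForm F V) (halt : B.IsAlt)
    (W : Submodule F V) : (B.restrict W).IsAlt := fun x => halt x

end Fiber

section CardSymp

open Module LinearMap

variable [Fintype F]

def ff (q : ℕ) : ℕ → ℕ → ℕ
  | 0, m => ∏ i ∈ Finset.range m, (q ^ m - q ^ i)
  | (r+1), m => (q ^ (2*(r+1)+m) - q ^ m) * q ^ (2*r+m+1) * ff q r m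

theorem card_symp (r : ℕ) :
    ∀ (m n : ℕ) (V : Type v) [AddCommGroup V] [Module F V] [Module.Finite F V]
      (B : LinearMap.BilinForm F V), B.IsAlt → n = 2 * r + m →
      Module.finrank F V = n → Module.finrank F (LinearMap.ker B) = m →
      Nat.card {v : Fin n → V // LinearIndependent F v ∧
        ∀ i j : Fin n, B (v i) (v j) = jent F r i.1 j.1}
        = ff (Fintype.card F) r m := by
  induction r with
  | zero =>
    intro m n V _ _ _ B halt hn hV hk
    haveI : Finite V := Module.finite_of_finite F
    have hB : B = 0 := LinearMap.ker_eq_top.mp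
      (Submodule.eq_top_of_finrank_eq (by rw [hk, hV]; omega))
    have hcond : ∀ v : Fin n → V, ∀ i j : Fin n, B (v i) (v j) = jent F 0 i.1 j.1 := by
      intro v i j
      rw [hB, jent_zero]
      rfl
    rw [Nat.card_congr (Equiv.subtypeEquivRight
      (fun v : Fin n → V => and_iff_left (hcond v)))]
    rw [card_linearIndependent (le_of_eq hV.symm)]
    have hm : n = m := by omega
    subst hm
    rw [hV]
    rw [Fin.prod_univ_eq_prod_range (fun i => Fintype.card F ^ n - Fintype.card F ^ i) n]
    simp [ff]
  | succ r ih =>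
    intro m n V _ _ _ B halt hn hV hk
    haveI : Finite V := Module.finite_of_finite F
    subst hn
    classical
    set S := {v : Fin (2*(r+1)+m) → V // LinearIndependent F v ∧
      ∀ i j, B (v i) (v j) = jent F (r+1) i.1 j.1} with hS
    set P := {p : V × V // B p.1 p.2 = 1} with hP
    have hphi : ∀ s : S, B (s.1 ⟨0, by omega⟩) (s.1 ⟨1, by omega⟩) = 1 := by
      intro s
      have h : B (s.1 ⟨0, by omega⟩) (s.1 ⟨1, by omega⟩) = jent F (r+1) 0 1 := s.2.2 _ _
      rwa [jent_01 (by omega)] at h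
    set φ : S → P := fun s => ⟨(s.1 ⟨0, by omega⟩, s.1 ⟨1, by omega⟩), hphi s⟩ with hφ
    haveI : Fintype P := Fintype.ofFinite _
    haveI : Fintype S := Fintype.ofFinite _
    have key : Nat.card S = (Fintype.card P) * ff (Fintype.card F) r m := by
      rw [Nat.card_congr (Equiv.sigmaFiberEquiv φ).symm, Nat.card_eq_fintype_card,
        Fintype.card_sigma]
      have hfib : ∀ p : P, Fintype.card {s : S // φ s = p}
          = ff (Fintype.card F) r m := by
        intro p
        rw [← Nat.card_eq_fintype_card]
        have e1 : {s : S // φ s = p} ≃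
            {s : S // s.1 ⟨0, by omega⟩ = p.1.1 ∧ s.1 ⟨1, by omega⟩ = p.1.2} :=
          Equiv.subtypeEquivRight (fun s => by
            constructor
            · intro h
              exact ⟨congrArg (fun x => x.1.1) h, congrArg (fun x => x.1.2) h⟩
            · intro h
              apply Subtype.ext
              exact Prod.ext h.1 h.2)
        obtain ⟨e2⟩ := fiber_equiv B halt r m p.1.1 p.1.2 p.2
        rw [Nat.card_congr (e1.trans e2)]
        exact ih m (2*r+m)
          (LinearMap.ker (B p.1.1) ⊓ LinearMap.ker (B p.1.2) : Submodule F V)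
          (B.restrict _) (restrict_isAlt B halt _) rfl
          (by rw [finrank_W B halt hV p.1.1 p.1.2 p.2]; omega)
          (by rw [finrank_kerW B halt p.1.1 p.1.2 p.2, hk])
      rw [Finset.sum_congr rfl (fun p _ => hfib p), Finset.sum_const, smul_eq_mul,
        Finset.card_univ]
    rw [key, ← Nat.card_eq_fintype_card, card_pairs B hV hk]
    show _ = ff (Fintype.card F) (r+1) m
    simp only [ff]
    have hexp : 2*(r+1)+m-1 = 2*r+m+1 := by omega
    rw [hexp]

lemma ff_zero_eq (q m : ℕ) :
    ff q 0 m = q ^ (m * (m - 1) / 2) * ∏ i ∈ Finset.Icc 1 m, (q ^ i - 1) := by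
  show ∏ i ∈ Finset.range m, (q ^ m - q ^ i) = _
  have h1 : ∀ i ∈ Finset.range m, q ^ m - q ^ i = q ^ i * (q ^ (m - i) - 1) := by
    intro i hi
    rw [Finset.mem_range] at hi
    rw [Nat.mul_sub, mul_one, ← pow_add]
    have : i + (m - i) = m := by omega
    rw [this]
  rw [Finset.prod_congr rfl h1, Finset.prod_mul_distrib, Finset.prod_pow_eq_pow_sum,
    Finset.sum_range_id]
  congr 1
  have h3 : ∀ j ∈ Finset.range m, q ^ (m - j) - 1 = q ^ (m - 1 - j + 1) - 1 := by
    intro j hj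
    rw [Finset.mem_range] at hj
    congr 2
    omega
  rw [Finset.prod_congr rfl h3, Finset.prod_range_reflect (fun j => q ^ (j + 1) - 1) m,
    ← Finset.Ico_add_one_right_eq_Icc, Finset.prod_Ico_eq_prod_range]
  try simp only [Nat.add_sub_cancel]
  exact Finset.prod_congr rfl (fun i _ => by rw [add_comm])

lemma ff_eq (q : ℕ) (r m : ℕ) :
    ff q r m = (q ^ (r ^ 2) * ∏ i ∈ Finset.Icc 1 r, (q ^ (2 * i) - 1)) *
      (q ^ (m * (m - 1) / 2) * ∏ i ∈ Finset.Icc 1 m, (q ^ i - 1)) *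
      q ^ (2 * r * m) := by
  induction r with
  | zero =>
    rw [ff_zero_eq]
    simp
  | succ r ihr =>
    show (q ^ (2*(r+1)+m) - q ^ m) * q ^ (2*r+m+1) * ff q r m = _
    rw [ihr]
    have hfac : q ^ (2*(r+1)+m) - q ^ m = q ^ m * (q ^ (2*(r+1)) - 1) := by
      rw [Nat.mul_sub, mul_one, ← pow_add]
      have : m + 2*(r+1) = 2*(r+1)+m := by omega
      rw [this]
    rw [hfac, Finset.prod_Icc_succ_top (by omega : 1 ≤ r+1)]
    generalize (q ^ (2*(r+1)) - 1) = A
    generalize (∏ i ∈ Finset.Icc 1 r, (q ^ (2*i) - 1)) = Pr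
    generalize (∏ i ∈ Finset.Icc 1 m, (q ^ i - 1)) = G
    have hpow : ∀ a b : ℕ, q ^ a * q ^ b = q ^ (a + b) := fun a b => (pow_add q a b).symm
    have hexp : m + (2*r+m+1) + r^2 + 2*r*m = (r+1)^2 + 2*(r+1)*m := by ring
    calc q ^ m * A * q ^ (2*r+m+1) * (q ^ (r^2) * Pr * (q ^ (m*(m-1)/2) * G) * q ^ (2*r*m))
        = (q ^ m * q ^ (2*r+m+1) * q ^ (r^2) * q ^ (2*r*m)) *
            (A * Pr * (q ^ (m*(m-1)/2) * G)) := by ring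
      _ = q ^ ((r+1)^2 + 2*(r+1)*m) * (A * Pr * (q ^ (m*(m-1)/2) * G)) := by
            rw [hpow, hpow, hpow, hexp]
      _ = q ^ ((r+1)^2) * (Pr * A) * (q ^ (m*(m-1)/2) * G) * q ^ (2*(r+1)*m) := by
            rw [← hpow]; ring

end CardSymp

section Bridge

open Module LinearMap

variable [Fintype F]

lemma sgn_ne_zero (i : ℕ) : sgn F i ≠ 0 := by
  unfold sgn
  split_ifs
  · exact one_ne_zero
  · exact neg_ne_zero.mpr one_ne_zero

lemma jent_eq_zero_of_ne {r i j : ℕ} (h : i ≠ ptn j) : jent F r i j = 0 := by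
  unfold jent
  rw [if_neg]
  rintro ⟨-, h2⟩
  exact h (by rw [h2, ptn_ptn])

lemma jent_apply_ptn {r j : ℕ} (hj : j < 2 * r) :
    jent F r (ptn j) j = sgn F (ptn j) := by
  unfold jent
  rw [if_pos ⟨ptn_lt.mpr hj, (ptn_ptn j).symm⟩]

lemma jent_eq_zero_right {r i j : ℕ} (h : ¬ j < 2 * r) : jent F r i j = 0 := by
  unfold jent
  rw [if_neg]
  rintro ⟨h1, h2⟩
  exact h (by rw [h2]; exact ptn_lt.mpr h1)

lemma row_eq {ν r : ℕ} (h2r : 2 * r ≤ ν) (x : Fin ν → F) (j : Fin ν) :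
    (x ᵥ* sympBlock F ν 0 r) j =
      if h : j.1 < 2 * r then
        x ⟨ptn j.1, lt_of_lt_of_le (ptn_lt.mpr h) h2r⟩ * sgn F (ptn j.1) else 0 := by
  by_cases hj : j.1 < 2 * r
  · rw [dif_pos hj]
    show ∑ i, x i * sympBlock F ν 0 r i j = _
    rw [Finset.sum_eq_single (⟨ptn j.1, lt_of_lt_of_le (ptn_lt.mpr hj) h2r⟩ : Fin ν)]
    · rw [sympBlock_eq_jent]
      show x _ * jent F r (ptn j.1) j.1 = _
      rw [jent_apply_ptn hj]
    · intro i _ hne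
      rw [sympBlock_eq_jent, jent_eq_zero_of_ne, mul_zero]
      intro hval
      exact hne (Fin.ext hval)
    · intro h
      exact absurd (Finset.mem_univ _) h
  · rw [dif_neg hj]
    show ∑ i, x i * sympBlock F ν 0 r i j = 0
    apply Finset.sum_eq_zero
    intro i _
    rw [sympBlock_eq_jent, jent_eq_zero_right hj, mul_zero]

lemma ker_B {ν r : ℕ} (h2r : 2 * r ≤ ν) :
    Module.finrank F (LinearMap.ker (Matrix.toBilin' (sympBlock F ν 0 r)))
      = ν - 2 * r := by
  classical
  set π : (Fin ν → F) →ₗ[F] (Fin (2*r) → F) :=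
    LinearMap.funLeft F F (Fin.castLE h2r) with hπ
  have hker : LinearMap.ker (Matrix.toBilin' (sympBlock F ν 0 r)) = LinearMap.ker π := by
    ext x
    simp only [LinearMap.mem_ker]
    constructor
    · intro hx
      have hrow0 : ∀ j : Fin ν, (x ᵥ* sympBlock F ν 0 r) j = 0 := by
        intro j
        have h1 : Matrix.toBilin' (sympBlock F ν 0 r) x (Pi.single j 1) = 0 := by
          rw [hx]
          simp
        rw [Matrix.toBilin'_apply', Matrix.dotProduct_mulVec,
          dotProduct_single, mul_one] at h1
        exact h1
      ext k
      rw [LinearMap.funLeft_apply]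
      have hptn : ptn k.1 < 2 * r := ptn_lt.mpr k.2
      have h2 := hrow0 ⟨ptn k.1, lt_of_lt_of_le hptn h2r⟩
      rw [row_eq h2r] at h2
      rw [dif_pos hptn] at h2
      have h3 := mul_eq_zero.mp h2
      rcases h3 with h3 | h3
      · have hcast : (Fin.castLE h2r k) =
            (⟨ptn (ptn k.1), lt_of_lt_of_le (ptn_lt.mpr hptn) h2r⟩ : Fin ν) := by
          apply Fin.ext
          show k.1 = ptn (ptn k.1)
          rw [ptn_ptn]
        rw [hcast]
        exact h3
      · exact absurd h3 (sgn_ne_zero _)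
    · intro hx
      apply LinearMap.ext
      intro y
      show Matrix.toBilin' (sympBlock F ν 0 r) x y = 0
      rw [Matrix.toBilin'_apply', Matrix.dotProduct_mulVec]
      have hz : x ᵥ* sympBlock F ν 0 r = 0 := by
        funext j
        rw [row_eq h2r]
        split_ifs with h
        · have h4 := congrFun hx (⟨ptn j.1, ptn_lt.mpr h⟩ : Fin (2*r))
          have h5 : x ⟨ptn j.1, lt_of_lt_of_le (ptn_lt.mpr h) h2r⟩ = 0 := h4
          rw [h5, zero_mul]
          rfl
        · rfl
      rw [hz, zero_dotProduct]
  rw [hker]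
  have hs : Function.Surjective π :=
    LinearMap.funLeft_surjective_of_injective F F _ (Fin.castLE_injective h2r)
  have h1 := LinearMap.finrank_range_add_finrank_ker π
  rw [LinearMap.range_eq_top.mpr hs, finrank_top] at h1
  simp only [Module.finrank_fintype_fun_eq_card, Fintype.card_fin] at h1
  omega

lemma isAlt_B {ν r : ℕ} (hchar : (2 : F) ≠ 0) :
    (Matrix.toBilin' (sympBlock F ν 0 r)).IsAlt := by
  intro x
  have hJT : (sympBlock F ν 0 r)ᵀ = -(sympBlock F ν 0 r) := by
    ext i j
    rw [Matrix.transpose_apply, Matrix.neg_apply, sympBlock_eq_jent, sympBlock_eq_jent]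
    exact jent_skew r i.1 j.1
  have key : Matrix.toBilin' (sympBlock F ν 0 r) x x
      = - Matrix.toBilin' (sympBlock F ν 0 r) x x := by
    conv_lhs => rw [Matrix.toBilin'_apply', Matrix.dotProduct_mulVec]
    have hJ : sympBlock F ν 0 r = -(sympBlock F ν 0 r)ᵀ := by
      rw [hJT, neg_neg]
    have h2 : x ᵥ* (sympBlock F ν 0 r) = -((sympBlock F ν 0 r) *ᵥ x) := by
      conv_lhs => rw [hJ]
      rw [Matrix.vecMul_neg, Matrix.vecMul_transpose]
    rw [h2, neg_dotProduct, dotProduct_comm, ← Matrix.toBilin'_apply']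
  have h3 : (2 : F) * Matrix.toBilin' (sympBlock F ν 0 r) x x = 0 := by
    rw [two_mul]
    nth_rewrite 2 [key]
    rw [add_neg_cancel]
  rcases mul_eq_zero.mp h3 with h | h
  · exact absurd h hchar
  · exact h

lemma entry_eq {ν r : ℕ} (T : Matrix (Fin ν) (Fin ν) F) (i j : Fin ν) :
    (Tᵀ * sympBlock F ν 0 r * T) i j
      = Matrix.toBilin' (sympBlock F ν 0 r) (Tᵀ i) (Tᵀ j) := by
  rw [Matrix.toBilin'_apply]
  simp only [Matrix.mul_apply, Finset.sum_mul]
  rw [Finset.sum_comm]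
  apply Finset.sum_congr rfl
  intro k _
  apply Finset.sum_congr rfl
  intro l _
  rw [Matrix.transpose_apply T i k, Matrix.transpose_apply T j l] <;> ring

end Bridge

end Stmt19

open Stmt19 in
theorem stmt_19 (F : Type*) [Field F] [Fintype F] (q : ℕ)
    (hq : Fintype.card F = q) (hodd : Odd q) (ν r : ℕ)
    (hr : 1 ≤ r) (h2r : 2 * r ≤ ν) :
    Nat.card {T : Matrix (Fin ν) (Fin ν) F //
        IsUnit T.det ∧ Tᵀ * sympBlock F ν 0 r * T = sympBlock F ν 0 r}
      = (q ^ (r ^ 2) * ∏ i ∈ Finset.Icc 1 r, (q ^ (2 * i) - 1)) *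
        (q ^ ((ν - 2 * r) * (ν - 2 * r - 1) / 2) *
          ∏ i ∈ Finset.Icc 1 (ν - 2 * r), (q ^ i - 1)) *
        q ^ (2 * r * (ν - 2 * r)) := by
  subst hq
  have hchar2 : (2 : F) ≠ 0 := by
    apply Ring.two_ne_zero
    intro hc
    have h1 := FiniteField.even_card_iff_char_two.mp hc
    have h2 := Nat.odd_iff.mp hodd
    omega
  have halt := isAlt_B (F := F) (ν := ν) (r := r) hchar2
  have hV : Module.finrank F (Fin ν → F) = ν := by
    simp [Module.finrank_fintype_fun_eq_card]
  have hker := ker_B (F := F) h2r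
  have e : {T : Matrix (Fin ν) (Fin ν) F //
        IsUnit T.det ∧ Tᵀ * sympBlock F ν 0 r * T = sympBlock F ν 0 r} ≃
      {v : Fin ν → (Fin ν → F) // LinearIndependent F v ∧
        ∀ i j : Fin ν, Matrix.toBilin' (sympBlock F ν 0 r) (v i) (v j)
          = jent F r i.1 j.1} := by
    refine Equiv.subtypeEquiv
      ⟨Matrix.transpose, Matrix.transpose, Matrix.transpose_transpose,
        Matrix.transpose_transpose⟩ ?_
    intro T
    show _ ↔ LinearIndependent F Tᵀ ∧ ∀ i j : Fin ν,
      Matrix.toBilin' (sympBlock F ν 0 r) (Tᵀ i) (Tᵀ j) = jent F r i.1 j.1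
    apply and_congr
    · rw [← Matrix.det_transpose]
      rw [← Matrix.isUnit_iff_isUnit_det]
      exact (Matrix.linearIndependent_rows_iff_isUnit (A := Tᵀ)).symm
    · constructor
      · intro h i j
        have h1 := congrFun (congrFun h i) j
        rw [entry_eq] at h1
        rw [h1, sympBlock_eq_jent]
      · intro h
        ext i j
        rw [entry_eq, h i j, sympBlock_eq_jent]
  rw [Nat.card_congr e]
  rw [card_symp r (ν - 2 * r) ν (Fin ν → F) (Matrix.toBilin' (sympBlock F ν 0 r))
    halt (by omega) hV (by rw [hker])]
  rw [ff_eq]
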